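/- Let x be an even nonnegative integer and let U, D, B ⊆ {1,…,⌊N/2⌋} with n=|U∪D|, N=x+1+2n, B∩(U∪D)=∅ and 2|B| ≤ x. Write u=|U|, d=|D|, m=2n−u−d and D̄={N+1−t : t∈D}, and assume the central position (N+1)/2 does not belong to U∪D∪B. Then M_c(CS_{x,1}(U;D;B)) = M(T_{1+u+d, x+m}(U ∪ D̄ ∪ {(N+1)/2})), i.e. the number of centrally symmetric lozenge tilings of CS_{x,1}(U;D;B) equals the number of lozenge tilings of the dented semihexagon with north side x+m, slanted sides 1+u+d, base N, and dents at the positions of U ∪ D̄ ∪ {(N+1)/2}. -/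

import Mathlib

open Finset

namespace Shuf

/-- A unit triangle of the triangular lattice: `(a, b, o)` where `o = false` is the
up-pointing unit triangle with vertices `(a,b), (a+1,b), (a,b+1)` (in the lattice
coordinates whose embedding is `(a,b) ↦ (a + b/2, b·√3/2)`), and `o = true` is the
down-pointing unit triangle with vertices `(a+1,b), (a,b+1), (a+1,b+1)`. -/
abbrev Tri : Type := ℤ × ℤ × Bool

/-- Adjacency from an up-pointing triangle `s` to a down-pointing triangle `t`
(sharing a unit edge). -/
def adjUD (s t : Tri) : Prop :=
  s.2.2 = false ∧ t.2.2 = true ∧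
    ((t.1 = s.1 ∧ t.2.1 = s.2.1) ∨ (t.1 = s.1 - 1 ∧ t.2.1 = s.2.1) ∨
      (t.1 = s.1 ∧ t.2.1 = s.2.1 - 1))

/-- Two unit triangles share a unit edge (form a lozenge). -/
def adj (s t : Tri) : Prop := adjUD s t ∨ adjUD t s

/-- A lozenge tiling of the region `R` with barrier edges `Bar`, encoded as the
involution pairing each unit triangle of `R` with the one it is matched to. -/
def IsTiling (R : Set Tri) (Bar : Set (Tri × Tri)) (f : Tri → Tri) : Prop :=
  (∀ t, t ∉ R → f t = t) ∧
    ∀ t ∈ R, f t ∈ R ∧ adj t (f t) ∧ f (f t) = t ∧ (t, f t) ∉ Bar ∧ (f t, t) ∉ Bar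

/-- `M R Bar` : the number of lozenge tilings of the region `R` with barriers `Bar`. -/
noncomputable def M (R : Set Tri) (Bar : Set (Tri × Tri)) : ℕ :=
  Nat.card {f : Tri → Tri // IsTiling R Bar f}

/-- 180° rotation about the point `(c.1/2, c.2/2)` (lattice coordinates). -/
def rot (c : ℤ × ℤ) (t : Tri) : Tri := (c.1 - t.1 - 1, c.2 - t.2.1 - 1, !t.2.2)

/-- `Mc c R Bar` : the number of lozenge tilings of `R` invariant under the 180°
rotation about the point `(c.1/2, c.2/2)`. -/
noncomputable def Mc (c : ℤ × ℤ) (R : Set Tri) (Bar : Set (Tri × Tri)) : ℕ :=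
  Nat.card {f : Tri → Tri // IsTiling R Bar f ∧ ∀ t, f (rot c t) = rot c (f t)}

/-- The doubly-dented hexagon whose horizontal axis (at height `0`) runs from the
west vertex `(0,0)` to the east vertex `(L,0)`, whose upper half is a trapezoid of
height `hu` and whose lower half is a trapezoid of height `hd`; the up-pointing unit
triangle just above the axis at position `i` is removed for `i ∈ U`, and the
down-pointing one just below the axis at position `i` is removed for `i ∈ D`
(positions are labelled `1,…,L` from left to right). -/
def HRegion (L hu hd : ℤ) (U D : Set ℤ) : Set Tri :=
  {t | (t.2.2 = false ∧ 0 ≤ t.2.1 ∧ t.2.1 < hu ∧ 0 ≤ t.1 ∧ t.1 + t.2.1 ≤ L - 1 ∧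
          (t.2.1 = 0 → t.1 + 1 ∉ U)) ∨
       (t.2.2 = true ∧ 0 ≤ t.2.1 ∧ t.2.1 < hu ∧ 0 ≤ t.1 ∧ t.1 + t.2.1 ≤ L - 2) ∨
       (t.2.2 = false ∧ -hd ≤ t.2.1 ∧ t.2.1 ≤ -1 ∧ -t.2.1 ≤ t.1 ∧ t.1 ≤ L - 1) ∨
       (t.2.2 = true ∧ -hd ≤ t.2.1 ∧ t.2.1 ≤ -1 ∧ -t.2.1 - 1 ≤ t.1 ∧ t.1 ≤ L - 1 ∧
          (t.2.1 = -1 → t.1 + 1 ∉ D))}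

/-- The barrier edges along the axis at the positions of `B`: the barrier at
position `i` forbids the vertical lozenge formed by the up-triangle just above and
the down-triangle just below the `i`-th unit segment of the axis. -/
def HBar (B : Set ℤ) : Set (Tri × Tri) :=
  {e | ∃ i ∈ B, e = ((i - 1, 0, false), (i - 1, -1, true)) ∨
                 e = ((i - 1, -1, true), (i - 1, 0, false))}

/-- `MH x y U D B` : the number of lozenge tilings of the doubly-dented hexagon
`H_{x,y}(U; D; B)`. -/
noncomputable def MH (x y : ℕ) (U D B : Finset ℤ) : ℕ :=
  M (HRegion (x + y + (U ∪ D).card) (y + U.card) (y + D.card) ↑U ↑D) (HBar ↑B)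

/-- `mir N W = {N + 1 - w : w ∈ W}`, the reflection of an index set. -/
def mir (N : ℤ) (W : Finset ℤ) : Finset ℤ := W.image (fun w => N + 1 - w)

/-- `MCS x y U D B` : the number of lozenge tilings of the centrally symmetric
doubly-dented hexagon `CS_{x,y}(U; D; B) = H_{x,y}(U ∪ D̄; D ∪ Ū; B ∪ B̄)`,
where `N = x + y + 2|U ∪ D|` and `W̄ = {N+1-w : w ∈ W}`. -/
noncomputable def MCS (x y : ℕ) (U D B : Finset ℤ) : ℕ :=
  MH x y (U ∪ mir (x + y + 2 * (U ∪ D).card) D) (D ∪ mir (x + y + 2 * (U ∪ D).card) U)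
    (B ∪ mir (x + y + 2 * (U ∪ D).card) B)

/-- `McCS x y U D B` : the number of centrally symmetric lozenge tilings of
`CS_{x,y}(U; D; B)` (tilings invariant under the 180° rotation about the center
`(N/2, 0)` of the region, `N = x + y + 2|U ∪ D|`). -/
noncomputable def McCS (x y : ℕ) (U D B : Finset ℤ) : ℕ :=
  let N : ℤ := x + y + 2 * (U ∪ D).card
  let U' : Finset ℤ := U ∪ mir N D
  let D' : Finset ℤ := D ∪ mir N U
  Mc (N, 0)
    (HRegion (x + y + (U' ∪ D').card) (y + U'.card) (y + D'.card) ↑U' ↑D')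
    (HBar ↑(B ∪ mir N B))

/-- `Δprod S = ∏_{s < s' ∈ S} (s' - s)`. -/
def Δprod (S : Finset ℤ) : ℤ :=
  ∏ p ∈ (S ×ˢ S).filter (fun p => p.1 < p.2), (p.2 - p.1)

/-- MacMahon's box formula `PP(a,b,c)`. -/
def PP (a b c : ℕ) : ℚ :=
  ∏ i ∈ Icc 1 a, ∏ j ∈ Icc 1 b, ∏ k ∈ Icc 1 c,
    (((i : ℚ) + j + k - 1) / ((i : ℚ) + j + k - 2))

/-- The hyperfactorial `H(n) = 0!·1!⋯(n-1)!`. -/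
def hyperfac (n : ℕ) : ℕ := ∏ k ∈ range n, k.factorial

/-- The Pochhammer symbol `(q)_r = q(q+1)⋯(q+r-1)`. -/
def poch (q : ℚ) (r : ℕ) : ℚ := ∏ i ∈ range r, (q + i)

/-- The dented semihexagon `T_{a,b}(S)`: the trapezoid with north side `b`, slanted
sides `a` and base `a + b` lying above the horizontal axis (base from `(0,0)` to
`(a+b,0)`), with the up-pointing unit triangles at the positions of `S` removed
from its base. -/
def TRegion (a b : ℤ) (S : Set ℤ) : Set Tri :=
  {t | (t.2.2 = false ∧ 0 ≤ t.2.1 ∧ t.2.1 < a ∧ 0 ≤ t.1 ∧ t.1 + t.2.1 ≤ a + b - 1 ∧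
          (t.2.1 = 0 → t.1 + 1 ∉ S)) ∨
       (t.2.2 = true ∧ 0 ≤ t.2.1 ∧ t.2.1 < a ∧ 0 ≤ t.1 ∧ t.1 + t.2.1 ≤ a + b - 2)}

/-- `MT a b S` : the number of lozenge tilings of `T_{a,b}(S)`. -/
noncomputable def MT (a b : ℤ) (S : Finset ℤ) : ℕ := M (TRegion a b ↑S) ∅

/-- The trapezoid with base `L` (from `(0,0)` to `(L,0)`), height `h`. -/
def trapRegion (L h : ℤ) : Set Tri :=
  {t | (t.2.2 = false ∧ 0 ≤ t.2.1 ∧ t.2.1 < h ∧ 0 ≤ t.1 ∧ t.1 + t.2.1 ≤ L - 1) ∨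
       (t.2.2 = true ∧ 0 ≤ t.2.1 ∧ t.2.1 < h ∧ 0 ≤ t.1 ∧ t.1 + t.2.1 ≤ L - 2)}

/-- The unit triangles of the up-pointing triangle of side `s` whose base runs from
`(p,0)` to `(p+s,0)` (lying above the axis). -/
def upTriSet (p : ℤ) (s : ℕ) : Set Tri :=
  {t | t.2.2 = false ∧ 0 ≤ t.2.1 ∧ p ≤ t.1 ∧ t.1 + t.2.1 ≤ p + s - 1} ∪
  {t | t.2.2 = true ∧ 0 ≤ t.2.1 ∧ p ≤ t.1 ∧ t.1 + t.2.1 ≤ p + s - 2}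

/-- The unit triangles of the down-pointing triangle of side `s` whose top edge runs
from `(p,0)` to `(p+s,0)` (lying below the axis). -/
def downTriSet (p : ℤ) (s : ℕ) : Set Tri :=
  {t | t.2.2 = true ∧ -(s : ℤ) ≤ t.2.1 ∧ t.2.1 ≤ -1 ∧ p - t.2.1 - 1 ≤ t.1 ∧ t.1 ≤ p + s - 1} ∪
  {t | t.2.2 = false ∧ -(s : ℤ) ≤ t.2.1 ∧ t.2.1 ≤ -1 ∧ p - t.2.1 ≤ t.1 ∧ t.1 ≤ p + s - 1}

/-- A triangle of side `s` along the axis starting at `p`, up- or down-pointing. -/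
def triSet (p : ℤ) (s : ℕ) (up : Bool) : Set Tri :=
  if up then upTriSet p s else downTriSet p s

/-- The removed triangles, at the dents given by a run/gap sequence
`a₁ (run), a₂ (gap), a₃ (run), …` starting at `p`. -/
def seqRemoved : ℤ → List ℕ → Set Tri
  | _, [] => ∅
  | p, [s] => upTriSet p s
  | p, s :: g :: r => upTriSet p s ∪ seqRemoved (p + s + g) r

/-- `oSum [a₁,a₂,…] = a₁ + a₃ + a₅ + ⋯`. -/
def oSum : List ℕ → ℕ
  | [] => 0
  | [s] => s
  | s :: _ :: r => s + oSum r

/-- `sFun l = s(a₁,…,a_r)` : the number of lozenge tilings of the generalized dented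
semihexagon `S(a₁,…,a_r)` (trapezoid of base `a₁+⋯+a_r` and height `a₁+a₃+⋯`, with
up-pointing triangles of sides `a₁, a₃, …` removed from its base at mutual
distances `a₂, a₄, …`, the first one touching the west vertex). -/
noncomputable def sFun (l : List ℕ) : ℕ :=
  M (trapRegion l.sum (oSum l) \ seqRemoved 0 l) ∅

/-- A fern: a chain of lattice triangles of alternating orientations along the axis,
given by the list of side-lengths and the orientation of the first triangle. -/
structure Fern where
  lengths : List ℕ
  firstUp : Bool

/-- The total length of a fern. -/
def Fern.total (F : Fern) : ℕ := F.lengths.sum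

/-- Sum of the entries at even positions if the flag is `true` (resp. odd positions
if `false`). -/
def upLenAux : Bool → List ℕ → ℕ
  | _, [] => 0
  | true, s :: r => s + upLenAux false r
  | false, _ :: r => upLenAux true r

/-- The sum of side-lengths of the up-pointing triangles of a fern. -/
def Fern.up (F : Fern) : ℕ := upLenAux F.firstUp F.lengths

/-- The sum of side-lengths of the down-pointing triangles of a fern. -/
def Fern.down (F : Fern) : ℕ := upLenAux (!F.firstUp) F.lengths

/-- The image of a fern under 180° rotation. -/
def Fern.rot (F : Fern) : Fern :=
  ⟨F.lengths.reverse, if F.lengths.length % 2 = 1 then !F.firstUp else F.firstUp⟩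

/-- Concatenation of two ferns (the second continuing the alternation of the first). -/
def Fern.cat (F G : Fern) : Fern := ⟨F.lengths ++ G.lengths, F.firstUp⟩

/-- The unit triangles of a chain of triangles of alternating orientations starting
at `p` with the first orientation `o`. -/
def chainSet : ℤ → Bool → List ℕ → Set Tri
  | _, _, [] => ∅
  | p, o, s :: r => triSet p s o ∪ chainSet (p + s) (!o) r

/-- The unit triangles of the ferns `Fs` placed along the axis starting at `p` with
gaps `ds` between consecutive ferns. -/
def fernsSet : ℤ → List Fern → List ℕ → Set Tri
  | _, [], _ => ∅
  | p, F :: Fs, ds => chainSet p F.firstUp F.lengths ∪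
      fernsSet (p + F.total + ds.headI) Fs ds.tail

def totUp (Fs : List Fern) : ℕ := (Fs.map Fern.up).sum
def totDown (Fs : List Fern) : ℕ := (Fs.map Fern.down).sum

/-- The hexagon with ferns removed `R_{x,y}(F₁,…,F_k | d₁,…,d_{k-1})`. -/
def RRegion (x y : ℕ) (Fs : List Fern) (ds : List ℕ) : Set Tri :=
  HRegion (x + y + totUp Fs + totDown Fs) (y + totUp Fs) (y + totDown Fs) ∅ ∅ \
    fernsSet 0 Fs ds

/-- The number of lozenge tilings of `R_{x,y}(F₁,…,F_k | d₁,…,d_{k-1})`. -/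
noncomputable def MR (x y : ℕ) (Fs : List Fern) (ds : List ℕ) : ℕ :=
  M (RRegion x y Fs ds) ∅

/-- The number of centrally symmetric lozenge tilings of
`R_{x,y}(F₁,…,F_k | d₁,…,d_{k-1})` (for a centrally symmetric datum; the center of
the hexagon is the midpoint `(L/2, 0)` of its axis). -/
noncomputable def McR (x y : ℕ) (Fs : List Fern) (ds : List ℕ) : ℕ :=
  Mc ((x + y + totUp Fs + totDown Fs : ℤ), 0) (RRegion x y Fs ds) ∅

/-- The positions (labelled `1,2,…` from the left) of the removed up-pointing unit
triangles just above the axis, for a chain starting at `p` with first orientation `o`. -/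
noncomputable def upRunPos : ℤ → Bool → List ℕ → Finset ℤ
  | _, _, [] => ∅
  | p, true, s :: r => Finset.Icc (p + 1) (p + s) ∪ upRunPos (p + s) false r
  | p, false, s :: r => upRunPos (p + s) true r

/-- The positions of the removed up-pointing unit triangles along the axis for the
ferns `Fs` with gaps `ds`, starting at `p`. -/
noncomputable def upPosAll : ℤ → List Fern → List ℕ → Finset ℤ
  | _, [], _ => ∅
  | p, F :: Fs, ds => upRunPos p F.firstUp F.lengths ∪
      upPosAll (p + F.total + ds.headI) Fs ds.tail

/-- The positions of the removed down-pointing unit triangles along the axis. -/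
noncomputable def downPosAll (p : ℤ) (Fs : List Fern) (ds : List ℕ) : Finset ℤ :=
  upPosAll p (Fs.map (fun F => Fern.mk F.lengths (!F.firstUp))) ds

/-- The unit triangles removed in the generalized dented semihexagon determined by
the maximal runs of the position set `A`: a unit triangle is removed precisely when
the interval of base positions it lies over is contained in `A`. -/
def runRemoved (A : Finset ℤ) : Set Tri :=
  {t | ∀ i ∈ Finset.Icc (t.1 + 1) (t.1 + t.2.1 + (if t.2.2 then 2 else 1)), i ∈ A}

/-- `MS A` : the number of lozenge tilings of the generalized dented semihexagon
`S(e₁, e₂, …)` where `e₁, e₃, …` are the lengths of the maximal runs of `A` and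
`e₂, e₄, …` the gaps between consecutive runs (base `= max A`, height `= |A|`). -/
noncomputable def MS (A : Finset ℤ) : ℕ :=
  M (trapRegion (WithBot.unbotD 0 A.max) A.card \ runRemoved A) ∅

/-- The fern list of `E_{x,y}(F₁,…,F_k | d₁,…,d_{k-1})`:
`F₁,…,F_{k-1}, F_k ∘ F̄_k, F̄_{k-1},…,F̄₁`. -/
def EFerns (Fs : List Fern) : List Fern :=
  Fs.dropLast ++ Fern.cat (Fs.getLastD ⟨[], true⟩) (Fern.rot (Fs.getLastD ⟨[], true⟩)) ::
    (Fs.dropLast.map Fern.rot).reverse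

/-- The gap list of `E_{x,y}` : `d₁,…,d_{k-1},d_{k-1},…,d₁`. -/
def Egaps (ds : List ℕ) : List ℕ := ds ++ ds.reverse

/-- The fern list of `E'_{x,y}(F₁,…,F_k | d₁,…,d_{k-1})` : `F₁,…,F_k,F̄_k,…,F̄₁`. -/
def E'Ferns (Fs : List Fern) : List Fern := Fs ++ (Fs.map Fern.rot).reverse

/-- The gap list of `E'_{x,y}` : `d₁,…,d_{k-1},1,d_{k-1},…,d₁`. -/
def E'gaps (ds : List ℕ) : List ℕ := ds ++ 1 :: ds.reverse

end Shuf

/-!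
In a lozenge tiling every down-pointing unit triangle is matched with an up-pointing one in its
own row or the row above. The upper half of `CS_{x,1}(U; D; B)` has `1 + u + d` rows and
`u + d` dents on the axis, hence exactly one more up- than down-pointing triangle, so every
tiling contains exactly one vertical lozenge crossing the axis. In a centrally symmetric tiling
the rotation maps this lozenge to itself, so it sits at the central position `(N + 1) / 2`,
where there is no barrier. Deleting it, a symmetric tiling is determined by its restriction to
the upper half minus the central up-pointing triangle, which is the dented semihexagon
`T_{1+u+d, x+m}(U ∪ D̄ ∪ {(N + 1) / 2})`; conversely every tiling of that semihexagon extends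
by rotation to a symmetric tiling of the hexagon.
-/

namespace Shuf

section Mirror

variable {N : ℤ}

lemma mem_mir {i : ℤ} {W : Finset ℤ} : i ∈ mir N W ↔ N + 1 - i ∈ W := by
  simp only [mir, mem_image]
  exact ⟨fun ⟨w, hw, hi⟩ => by rwa [← hi, sub_sub_cancel], fun h => ⟨_, h, sub_sub_cancel _ _⟩⟩

lemma mir_mir (W : Finset ℤ) : mir N (mir N W) = W := by
  ext i
  rw [mem_mir, mem_mir, sub_sub_cancel]

lemma mir_union (V W : Finset ℤ) : mir N (V ∪ W) = mir N V ∪ mir N W := image_union _ _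

lemma card_mir (W : Finset ℤ) : (mir N W).card = W.card :=
  card_image_of_injective _ fun _ _ h => by simpa using h

lemma mem_union_mir_of_two_mul_eq {c : ℤ} (hc : 2 * c = N + 1) {V W : Finset ℤ} :
    c ∈ V ∪ mir N W ↔ c ∈ V ∨ c ∈ W := by
  rw [mem_union, mem_mir, show N + 1 - c = c by omega]

lemma mir_subset_Icc {W : Finset ℤ} (hW : W ⊆ Icc 1 N) : mir N W ⊆ Icc 1 N := fun i hi => by
  have := mem_Icc.1 (hW (mem_mir.1 hi))
  exact mem_Icc.2 (by omega)

lemma disjoint_mir_of_two_mul_le {V W : Finset ℤ} (hV : ∀ i ∈ V, 2 * i ≤ N)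
    (hW : ∀ i ∈ W, 2 * i ≤ N) : Disjoint V (mir N W) := by
  refine disjoint_left.2 fun i hiV hiW => ?_
  have := hW _ (mem_mir.1 hiW)
  have := hV i hiV
  omega

lemma card_union_mir_of_two_mul_le {V W : Finset ℤ} (hV : ∀ i ∈ V, 2 * i ≤ N)
    (hW : ∀ i ∈ W, 2 * i ≤ N) : (V ∪ mir N W).card = V.card + W.card := by
  rw [card_union_of_disjoint (disjoint_mir_of_two_mul_le hV hW), card_mir]

end Mirror

section Lattice

lemma rot_rot (c : ℤ × ℤ) (t : Tri) : rot c (rot c t) = t := by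
  obtain ⟨a, b, o⟩ := t
  simp only [rot, Bool.not_not, Prod.mk.injEq, and_true]
  constructor <;> ring

lemma adj_comm {s t : Tri} : adj s t ↔ adj t s := Or.comm

lemma adjUD_rot (c : ℤ × ℤ) {s t : Tri} (h : adjUD s t) : adjUD (rot c t) (rot c s) := by
  obtain ⟨hs, ht, hst⟩ := h
  refine ⟨by simp [rot, ht], by simp [rot, hs], ?_⟩
  simp only [rot]
  omega

lemma adj_rot (c : ℤ × ℤ) {s t : Tri} (h : adj s t) : adj (rot c s) (rot c t) :=
  h.symm.imp (adjUD_rot c) (adjUD_rot c)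

lemma adj.orient {s t : Tri} (h : adj s t) : t.2.2 = !s.2.2 := by
  rcases h with ⟨hs, ht, -⟩ | ⟨ht, hs, -⟩ <;> simp [hs, ht]

lemma adj.row_of_down {s t : Tri} (hs : s.2.2 = true) (h : adj s t) :
    t.2.1 = s.2.1 ∨ t.2.1 = s.2.1 + 1 := by
  rcases h with ⟨h, -, -⟩ | ⟨-, -, h⟩
  · simp [hs] at h
  · omega

lemma adj.eq_of_row_lt {s t : Tri} (hs : s.2.2 = false) (h : adj s t) (hrow : t.2.1 < s.2.1) :
    t = (s.1, s.2.1 - 1, true) := by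
  rcases h with ⟨-, ht, h⟩ | ⟨-, h, -⟩
  · obtain ⟨a, b, o⟩ := t
    simp only at ht h hrow ⊢
    subst ht
    simp only [Prod.mk.injEq, and_true]
    omega
  · simp [hs] at h

end Lattice

section Tilings

variable {R S : Set Tri} {Bar : Set (Tri × Tri)} {f g : Tri → Tri}

lemma IsTiling.anti_bar {Bar' : Set (Tri × Tri)} (hf : IsTiling R Bar f) (h : Bar' ⊆ Bar) :
    IsTiling R Bar' f := by
  refine ⟨hf.1, fun t ht => ?_⟩
  obtain ⟨h₁, h₂, h₃, h₄, h₅⟩ := hf.2 t ht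
  exact ⟨h₁, h₂, h₃, fun h' => h₄ (h h'), fun h' => h₅ (h h')⟩

lemma IsTiling.of_bar_empty (hf : IsTiling R ∅ f) (hBar : ∀ t ∈ R, ∀ s ∈ R, (t, s) ∉ Bar) :
    IsTiling R Bar f := by
  refine ⟨hf.1, fun t ht => ?_⟩
  obtain ⟨h₁, h₂, h₃, -, -⟩ := hf.2 t ht
  exact ⟨h₁, h₂, h₃, hBar t ht _ h₁, hBar _ h₁ t ht⟩

lemma IsTiling.restrict [DecidablePred (· ∈ S)] (hf : IsTiling R Bar f) (hSR : S ⊆ R)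
    (hS : Set.MapsTo f S S) : IsTiling S Bar (S.piecewise f id) := by
  refine ⟨fun t ht => S.piecewise_eq_of_notMem _ _ ht, fun t ht => ?_⟩
  obtain ⟨-, hadj, hff, hb₁, hb₂⟩ := hf.2 t (hSR ht)
  rw [S.piecewise_eq_of_mem _ _ ht, S.piecewise_eq_of_mem _ _ (hS ht)]
  exact ⟨hS ht, hadj, hff, hb₁, hb₂⟩

lemma IsTiling.piecewise [DecidablePred (· ∈ R)] (hf : IsTiling R Bar f) (hg : IsTiling S Bar g)
    (hRS : Disjoint R S) : IsTiling (R ∪ S) Bar (R.piecewise f g) := by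
  refine ⟨fun t ht => ?_, fun t ht => ?_⟩
  · rw [Set.mem_union, not_or] at ht
    rw [R.piecewise_eq_of_notMem _ _ ht.1, hg.1 t ht.2]
  by_cases htR : t ∈ R
  · obtain ⟨hfR, hadj, hff, hb⟩ := hf.2 t htR
    rw [R.piecewise_eq_of_mem _ _ htR, R.piecewise_eq_of_mem _ _ hfR]
    exact ⟨Or.inl hfR, hadj, hff, hb⟩
  · have htS : t ∈ S := ht.resolve_left htR
    obtain ⟨hgS, hadj, hgg, hb⟩ := hg.2 t htS
    have hgR : g t ∉ R := Set.disjoint_right.1 hRS hgS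
    rw [R.piecewise_eq_of_notMem _ _ htR, R.piecewise_eq_of_notMem _ _ hgR]
    exact ⟨Or.inr hgS, hadj, hgg, hb⟩

lemma isTiling_swap {a b : Tri} (hab : adj a b) (hba : (a, b) ∉ Bar) (hba' : (b, a) ∉ Bar) :
    IsTiling {a, b} Bar (Equiv.swap a b) := by
  refine ⟨fun t ht => ?_, fun t ht => ?_⟩
  · simp only [Set.mem_insert_iff, Set.mem_singleton_iff, not_or] at ht
    exact Equiv.swap_apply_of_ne_of_ne ht.1 ht.2
  rcases ht with rfl | rfl
  · simp [hab, hba, hba']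
  · simp [adj_comm.1 hab, hba, hba']

lemma IsTiling.conj_rot (c : ℤ × ℤ) (hf : IsTiling R Bar f) :
    IsTiling (rot c ⁻¹' R) (Prod.map (rot c) (rot c) ⁻¹' Bar) (rot c ∘ f ∘ rot c) := by
  refine ⟨fun t ht => ?_, fun t ht => ?_⟩
  · simp only [Function.comp_apply, hf.1 _ ht, rot_rot]
  obtain ⟨hfR, hadj, hff, hb₁, hb₂⟩ := hf.2 _ ht
  have hadj' := adj_rot c hadj
  simp only [rot_rot] at hadj'
  refine ⟨by simpa [rot_rot] using hfR, hadj', by simp [rot_rot, hff], ?_, ?_⟩ <;>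
    simpa [rot_rot]

lemma IsTiling.apply_eq_of_row_lt (hf : IsTiling R Bar f) {t : Tri} (ht : t ∈ R)
    (hrow : (f t).2.1 < t.2.1) : t.2.2 = false ∧ f t = (t.1, t.2.1 - 1, true) := by
  obtain ⟨-, hadj, -⟩ := hf.2 t ht
  cases hto : t.2.2
  · exact ⟨rfl, hadj.eq_of_row_lt hto hrow⟩
  · have := hadj.row_of_down hto
    omega

end Tilings

lemma existsUnique_mem_apply_notMem_of_card_eq_succ {α : Type*} [DecidableEq α] {P Q : Finset α}
    {f : α → α} (hQP : ∀ q ∈ Q, f q ∈ P) (hP : ∀ p ∈ P, f (f p) = p) (hQ : ∀ q ∈ Q, f (f q) = q)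
    (hcard : P.card = Q.card + 1) : ∃! p, p ∈ P ∧ f p ∉ Q := by
  have hfilter : P.filter (fun p => f p ∉ Q) = P \ Q.image f := by
    ext p
    simp only [mem_filter, mem_sdiff, mem_image, and_congr_right_iff]
    intro hp
    exact ⟨fun h ⟨q, hq, hqp⟩ => h (by rwa [← hqp, hQ q hq]), fun h hfp => h ⟨_, hfp, hP p hp⟩⟩
  have hinj : Set.InjOn f Q := fun a ha b hb hab => by rw [← hQ a ha, hab, hQ b hb]
  have himage : Q.image f ⊆ P := image_subset_iff.2 hQP
  have hone : (P.filter fun p => f p ∉ Q).card = 1 := by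
    rw [hfilter, card_sdiff_of_subset himage, card_image_of_injOn hinj, hcard,
      Nat.add_sub_cancel_left]
  obtain ⟨p, hp⟩ := card_eq_one.1 hone
  refine ⟨p, mem_filter.1 (hp ▸ mem_singleton_self p), fun q hq => ?_⟩
  rw [← mem_singleton, ← hp, mem_filter]
  exact hq

section Counting

variable {N h : ℤ}

-- `trapCells N h` indexes the up-pointing and `trapCells (N - 1) h` the down-pointing unit
-- triangles of the trapezoid with base `N` and height `h`.
noncomputable def trapCells (L h : ℤ) : Finset (ℤ × ℤ) :=
  (Icc 0 (L - 1) ×ˢ Icc 0 (h - 1)).filter fun p => p.1 + p.2 ≤ L - 1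

lemma card_trapCells (hh : 0 ≤ h) (hhN : h ≤ N) :
    ((trapCells N h).card : ℤ) = (trapCells (N - 1) h).card + h := by
  have hsplit : trapCells N h =
      trapCells (N - 1) h ∪ (Icc 0 (h - 1)).image fun b => (N - 1 - b, b) := by
    ext ⟨a, b⟩
    simp only [trapCells, mem_union, mem_filter, mem_product, mem_Icc, mem_image,
      Prod.mk.injEq]
    constructor
    · rintro ⟨⟨⟨ha₀, ha₁⟩, hb₀, hb₁⟩, hab⟩
      by_cases hlt : a + b ≤ N - 2
      · exact Or.inl ⟨⟨⟨ha₀, by omega⟩, hb₀, hb₁⟩, by omega⟩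
      · exact Or.inr ⟨b, ⟨hb₀, hb₁⟩, by omega, rfl⟩
    · rintro (⟨⟨⟨ha₀, ha₁⟩, hb₀, hb₁⟩, hab⟩ | ⟨b, ⟨hb₀, hb₁⟩, rfl, rfl⟩) <;> omega
  have hdisj : Disjoint (trapCells (N - 1) h) ((Icc 0 (h - 1)).image fun b => (N - 1 - b, b)) := by
    simp only [disjoint_left, trapCells, mem_filter, mem_image, mem_Icc, Prod.forall,
      Prod.mk.injEq]
    rintro a b ⟨-, hab⟩ ⟨b', -, rfl, rfl⟩
    omega
  rw [hsplit, card_union_of_disjoint hdisj,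
    card_image_of_injective _ fun b b' hbb' => (Prod.mk.inj hbb').2, Int.card_Icc]
  omega

def cellTri (o : Bool) : ℤ × ℤ ↪ Tri :=
  ⟨fun p => (p.1, p.2, o), fun p q hpq => by simpa [Prod.ext_iff] using hpq⟩

noncomputable def upperUps (N h : ℤ) (U : Finset ℤ) : Finset Tri :=
  (trapCells N h \ U.image fun i => (i - 1, 0)).map (cellTri false)

noncomputable def upperDowns (N h : ℤ) : Finset Tri := (trapCells (N - 1) h).map (cellTri true)

variable {hd : ℤ} {U : Finset ℤ} {D : Set ℤ}

lemma mem_map_cellTri {o : Bool} {s : Finset (ℤ × ℤ)} {t : Tri} :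
    t ∈ s.map (cellTri o) ↔ (t.1, t.2.1) ∈ s ∧ t.2.2 = o := by
  obtain ⟨a, b, o'⟩ := t
  simp only [mem_map, cellTri, Prod.ext_iff]
  constructor
  · rintro ⟨p, hp, rfl, rfl, rfl⟩
    exact ⟨hp, rfl⟩
  · rintro ⟨hp, rfl⟩
    exact ⟨_, hp, rfl, rfl, rfl⟩

lemma mem_upperUps {t : Tri} :
    t ∈ upperUps N h U ↔ t ∈ HRegion N h hd U D ∧ 0 ≤ t.2.1 ∧ t.2.2 = false := by
  obtain ⟨a, b, o⟩ := t
  simp only [upperUps, mem_map_cellTri, trapCells, HRegion, mem_sdiff, mem_filter, mem_product,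
    mem_Icc, mem_image, Prod.ext_iff, Set.mem_ofPred_eq, mem_coe]
  cases o <;> simp only [Bool.false_eq_true, Bool.true_eq_false, false_and, true_and, and_true,
    and_false, or_false, false_or]
  constructor
  · rintro ⟨⟨⟨⟨ha₀, ha₁⟩, hb₀, hb₁⟩, hab⟩, hU⟩
    exact ⟨Or.inl ⟨hb₀, by omega, ha₀, hab, fun hb hmem => hU ⟨a + 1, hmem, by omega, hb.symm⟩⟩,
      hb₀⟩
  · rintro ⟨⟨hb₀, hb₁, ha₀, hab, hU⟩ | ⟨-, hb, -⟩, hb₀⟩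
    · exact ⟨⟨⟨⟨ha₀, by omega⟩, hb₀, by omega⟩, hab⟩,
        fun ⟨u, hu, hua, hb⟩ => hU hb.symm (by rwa [← hua, sub_add_cancel])⟩
    · omega

lemma mem_upperDowns {t : Tri} :
    t ∈ upperDowns N h ↔ t ∈ HRegion N h hd U D ∧ 0 ≤ t.2.1 ∧ t.2.2 = true := by
  obtain ⟨a, b, o⟩ := t
  simp only [upperDowns, mem_map_cellTri, trapCells, HRegion, mem_filter, mem_product,
    mem_Icc, Set.mem_ofPred_eq]
  cases o <;> simp only [Bool.false_eq_true, Bool.true_eq_false, false_and, true_and, and_true,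
    and_false, or_false, false_or]
  constructor
  · rintro ⟨⟨⟨ha₀, ha₁⟩, hb₀, hb₁⟩, hab⟩
    exact ⟨Or.inl ⟨hb₀, by omega, ha₀, by omega⟩, hb₀⟩
  · rintro ⟨⟨hb₀, hb₁, ha₀, hab⟩ | ⟨-, hb, -⟩, hb₀⟩
    · exact ⟨⟨⟨ha₀, by omega⟩, hb₀, by omega⟩, by omega⟩
    · omega

lemma card_upperUps (hU : U ⊆ Icc 1 N) (hh : h = U.card + 1) (hhN : h ≤ N) :
    (upperUps N h U).card = (upperDowns N h).card + 1 := by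
  have hdents : U.image (fun i => (i - 1, (0 : ℤ))) ⊆ trapCells N h := by
    intro p hp
    obtain ⟨i, hi, rfl⟩ := mem_image.1 hp
    have := mem_Icc.1 (hU hi)
    simp only [trapCells, mem_filter, mem_product, mem_Icc]
    omega
  have hcard : (U.image fun i => (i - 1, (0 : ℤ))).card = U.card :=
    card_image_of_injective _ fun i j hij => by simpa using hij
  have := card_trapCells (N := N) (h := h) (by omega) hhN
  have := card_le_card hdents
  rw [upperUps, upperDowns, card_map, card_map, card_sdiff_of_subset hdents, hcard]
  omega

lemma IsTiling.existsUnique_crossing {Bar : Set (Tri × Tri)} {f : Tri → Tri}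
    (hf : IsTiling (HRegion N h hd U D) Bar f) (hU : U ⊆ Icc 1 N) (hh : h = U.card + 1)
    (hhN : h ≤ N) : ∃! t, t ∈ HRegion N h hd U D ∧ 0 ≤ t.2.1 ∧ (f t).2.1 < 0 := by
  have hUps : ∀ t, t ∈ upperUps N h U ↔ _ := fun t => mem_upperUps (hd := hd) (D := D)
  have hDowns : ∀ t, t ∈ upperDowns N h ↔ _ := fun t => mem_upperDowns (hd := hd) (U := U) (D := D)
  have hcross : ∀ t, (t ∈ upperUps N h U ∧ f t ∉ upperDowns N h) ↔
      (t ∈ HRegion N h hd U D ∧ 0 ≤ t.2.1 ∧ (f t).2.1 < 0) := by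
    intro t
    rw [hUps, hDowns]
    constructor
    · rintro ⟨⟨htR, ht₀, hto⟩, hft⟩
      obtain ⟨hfR, hadj, -⟩ := hf.2 t htR
      exact ⟨htR, ht₀, by simp_all [hadj.orient]⟩
    · rintro ⟨htR, ht₀, hft⟩
      exact ⟨⟨htR, ht₀, (hf.apply_eq_of_row_lt htR (by omega)).1⟩,
        fun hq => by linarith [hq.2.1]⟩
  refine (existsUnique_congr hcross).1 (existsUnique_mem_apply_notMem_of_card_eq_succ ?_ ?_ ?_
    (card_upperUps hU hh hhN))
  · intro q hq
    obtain ⟨hqR, hq₀, hqo⟩ := (hDowns q).1 hq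
    obtain ⟨hfR, hadj, -⟩ := hf.2 q hqR
    refine (hUps _).2 ⟨hfR, ?_, by simp [hadj.orient, hqo]⟩
    by_contra hneg
    simp [(hf.apply_eq_of_row_lt hqR (by omega)).1] at hqo
  · exact fun p hp => (hf.2 p ((hUps p).1 hp).1).2.2.1
  · exact fun q hq => (hf.2 q ((hDowns q).1 hq).1).2.2.1

end Counting

section Hexagon

def axisUp (i : ℤ) : Tri := (i - 1, 0, false)

def axisDown (i : ℤ) : Tri := (i - 1, -1, true)

variable {N c h : ℤ} {U : Finset ℤ}

lemma rot_axisUp (i : ℤ) : rot (N, 0) (axisUp i) = axisDown (N + 1 - i) := by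
  simp only [rot, axisUp, axisDown, Bool.not_false, Prod.mk.injEq, and_true]
  constructor <;> ring

lemma rot_axisDown (i : ℤ) : rot (N, 0) (axisDown i) = axisUp (N + 1 - i) := by
  simp only [rot, axisUp, axisDown, Bool.not_true, Prod.mk.injEq, and_true]
  constructor <;> ring

lemma adj_axisUp_axisDown (i : ℤ) : adj (axisUp i) (axisDown i) :=
  Or.inl ⟨rfl, rfl, Or.inr (Or.inr ⟨rfl, by simp [axisUp, axisDown]⟩)⟩

lemma rows_of_mem_HBar {B : Set ℤ} {p q : Tri} (h : (p, q) ∈ HBar B) :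
    (p.2.1 = 0 ∧ q.2.1 = -1) ∨ (p.2.1 = -1 ∧ q.2.1 = 0) := by
  obtain ⟨i, -, h | h⟩ := h <;> simp only [Prod.mk.injEq] at h <;> simp [h.1, h.2]

lemma axisUp_axisDown_notMem_HBar {B : Set ℤ} {i : ℤ} (hi : i ∉ B) :
    (axisUp i, axisDown i) ∉ HBar B := by
  rintro ⟨j, hj, h | h⟩ <;> simp only [axisUp, axisDown, Prod.mk.injEq] at h
  · exact hi (by rwa [show i = j by omega])
  · simp at h

lemma axisDown_axisUp_notMem_HBar {B : Set ℤ} {i : ℤ} (hi : i ∉ B) :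
    (axisDown i, axisUp i) ∉ HBar B := by
  rintro ⟨j, hj, h | h⟩ <;> simp only [axisUp, axisDown, Prod.mk.injEq] at h
  · simp at h
  · exact hi (by rwa [show i = j by omega])

lemma rot_mem_HRegion {t : Tri} (ht : t ∈ HRegion N h h U (mir N U)) :
    rot (N, 0) t ∈ HRegion N h h U (mir N U) := by
  obtain ⟨a, b, o⟩ := t
  simp only [HRegion, rot, Set.mem_ofPred_eq, mem_coe, mem_mir] at ht ⊢
  cases o <;> simp only [Bool.not_false, Bool.not_true, Bool.false_eq_true, Bool.true_eq_false,
    false_and, true_and, or_false, false_or] at ht ⊢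
  · rcases ht with ⟨hb₀, hb₁, ha₀, hab, hU⟩ | hlow
    · refine Or.inr ⟨by omega, by omega, by omega, by omega, fun hb => ?_⟩
      rw [show N + 1 - (N - a - 1 + 1) = a + 1 by ring]
      exact hU (by omega)
    · exact Or.inl (by omega)
  · rcases ht with hup | ⟨hb₀, hb₁, ha₀, hab, hD⟩
    · exact Or.inr (by omega)
    · refine Or.inl ⟨by omega, by omega, by omega, by omega, fun hb => ?_⟩
      rw [show N - a - 1 + 1 = N + 1 - (a + 1) by ring]
      exact hD (by omega)

lemma mem_TRegion_iff {hd : ℤ} {D : Set ℤ} {t : Tri} :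
    t ∈ TRegion h (N - h) ↑(U ∪ {c}) ↔ t ∈ HRegion N h hd U D ∧ 0 ≤ t.2.1 ∧ t ≠ axisUp c := by
  obtain ⟨a, b, o⟩ := t
  simp only [TRegion, HRegion, axisUp, Set.mem_ofPred_eq, coe_union, coe_singleton,
    Set.mem_union, mem_coe, Set.mem_singleton_iff, ne_eq, Prod.mk.injEq, not_and]
  cases o <;>
    simp only [Bool.false_eq_true, Bool.true_eq_false, false_and, true_and, or_false, false_or]
  · constructor
    · rintro ⟨hb₀, hb₁, ha₀, hab, hU⟩
      exact ⟨Or.inl ⟨hb₀, hb₁, ha₀, by omega, fun hb hmem => hU hb (Or.inl hmem)⟩, hb₀,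
        fun ha hb _ => hU hb (Or.inr (by omega))⟩
    · rintro ⟨⟨hb₀, hb₁, ha₀, hab, hU⟩ | ⟨-, hb, -⟩, hb₀, hc⟩
      · exact ⟨hb₀, hb₁, ha₀, by omega,
          fun hb => not_or.2 ⟨hU hb, fun hac => hc (by omega) hb trivial⟩⟩
      · omega
  · constructor
    · exact fun h => ⟨Or.inl (by omega), by omega, fun _ _ => id⟩
    · rintro ⟨h | ⟨-, hb, -⟩, hb₀, -⟩ <;> omega

variable {Bar : Set (Tri × Tri)} {f : Tri → Tri}

lemma IsTiling.crossing_iff_eq_axisUp (hf : IsTiling (HRegion N h h U (mir N U)) Bar f)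
    (hsym : ∀ t, f (rot (N, 0) t) = rot (N, 0) (f t)) (hN : N = 2 * c - 1)
    (hU : U ⊆ Icc 1 N) (hh : h = U.card + 1) (hhN : h ≤ N) (t : Tri) :
    (t ∈ HRegion N h h U (mir N U) ∧ 0 ≤ t.2.1 ∧ (f t).2.1 < 0) ↔ t = axisUp c := by
  obtain ⟨t₀, ⟨ht₀R, ht₀, hft₀⟩, huniq⟩ := hf.existsUnique_crossing hU hh hhN
  obtain ⟨ht₀o, hft₀eq⟩ := hf.apply_eq_of_row_lt ht₀R (by omega)
  have hrow : t₀.2.1 = 0 := by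
    rw [hft₀eq] at hft₀
    dsimp only at hft₀
    omega
  -- the rotation of the crossing lozenge is again a crossing lozenge
  have hmirror : rot (N, 0) (f t₀) = t₀ := by
    refine huniq _ ⟨rot_mem_HRegion (hf.2 t₀ ht₀R).1, ?_, ?_⟩
    · simp [hft₀eq, rot, hrow]
    · rw [hsym, (hf.2 t₀ ht₀R).2.2.1]
      simp [rot, hrow]
  have ht₀c : t₀ = axisUp c := by
    obtain ⟨a, b, o⟩ := t₀
    simp only [hft₀eq, rot, Prod.mk.injEq] at hmirror hrow ht₀o
    simp only [axisUp, Prod.mk.injEq, hrow, ht₀o, and_true]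
    omega
  exact ⟨fun ht => (huniq t ht).trans ht₀c, fun ht => ht ▸ ht₀c ▸ ⟨ht₀R, ht₀, hft₀⟩⟩

lemma IsTiling.apply_axisUp (hf : IsTiling (HRegion N h h U (mir N U)) Bar f)
    (hsym : ∀ t, f (rot (N, 0) t) = rot (N, 0) (f t)) (hN : N = 2 * c - 1)
    (hU : U ⊆ Icc 1 N) (hh : h = U.card + 1) (hhN : h ≤ N) :
    f (axisUp c) = axisDown c := by
  obtain ⟨hR, -, hrow⟩ := (hf.crossing_iff_eq_axisUp hsym hN hU hh hhN _).2 rfl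
  rw [(hf.apply_eq_of_row_lt hR (by simpa [axisUp] using hrow)).2]
  rfl

lemma IsTiling.mapsTo_TRegion (hf : IsTiling (HRegion N h h U (mir N U)) Bar f)
    (hsym : ∀ t, f (rot (N, 0) t) = rot (N, 0) (f t)) (hN : N = 2 * c - 1)
    (hU : U ⊆ Icc 1 N) (hh : h = U.card + 1) (hhN : h ≤ N) :
    Set.MapsTo f (TRegion h (N - h) ↑(U ∪ {c})) (TRegion h (N - h) ↑(U ∪ {c})) := by
  intro t ht
  rw [mem_TRegion_iff (hd := h) (D := ↑(mir N U))] at ht ⊢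
  obtain ⟨htR, ht₀, htc⟩ := ht
  obtain ⟨hfR, -, hff, -⟩ := hf.2 t htR
  refine ⟨hfR, ?_, fun hfc => ?_⟩
  · by_contra hneg
    exact htc ((hf.crossing_iff_eq_axisUp hsym hN hU hh hhN t).1 ⟨htR, ht₀, by omega⟩)
  · rw [← hff, hfc, hf.apply_axisUp hsym hN hU hh hhN] at ht₀
    simp [axisDown] at ht₀

lemma rot_mem_HRegion_iff {t : Tri} :
    rot (N, 0) t ∈ HRegion N h h U (mir N U) ↔ t ∈ HRegion N h h U (mir N U) :=
  ⟨fun ht => rot_rot (N, 0) t ▸ rot_mem_HRegion ht, rot_mem_HRegion⟩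

lemma axisUp_mem_HRegion (hc : 1 ≤ c) (hcN : c ≤ N) (hh : 1 ≤ h) (hcU : c ∉ U) :
    axisUp c ∈ HRegion N h h U (mir N U) :=
  Or.inl ⟨rfl, le_rfl, hh, by simp [axisUp]; omega, by simp [axisUp]; omega,
    fun _ => by simpa [axisUp] using hcU⟩

lemma HRegion_eq_union (hN : N = 2 * c - 1) (hc : 1 ≤ c) (hh : 1 ≤ h) (hcU : c ∉ U) :
    HRegion N h h U (mir N U) = TRegion h (N - h) ↑(U ∪ {c}) ∪
      (rot (N, 0) ⁻¹' TRegion h (N - h) ↑(U ∪ {c}) ∪ {axisUp c, axisDown c}) := by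
  have hup := axisUp_mem_HRegion (by omega) (by omega) hh hcU (N := N)
  have hρup : rot (N, 0) (axisUp c) = axisDown c := by rw [rot_axisUp, show N + 1 - c = c by omega]
  ext t
  simp only [Set.mem_union, Set.mem_preimage, Set.mem_insert_iff, Set.mem_singleton_iff,
    mem_TRegion_iff (hd := h) (D := ↑(mir N U)), rot_mem_HRegion_iff]
  constructor
  · intro ht
    by_cases hrow : 0 ≤ t.2.1
    · by_cases htc : t = axisUp c
      · exact Or.inr (Or.inr (Or.inl htc))
      · exact Or.inl ⟨ht, hrow, htc⟩
    · by_cases htc : t = axisDown c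
      · exact Or.inr (Or.inr (Or.inr htc))
      · refine Or.inr (Or.inl ⟨ht, by simp [rot]; omega, fun hρt => htc ?_⟩)
        rw [← rot_rot (N, 0) t, hρt, hρup]
  · rintro (⟨ht, -⟩ | ⟨ht, -⟩ | rfl | rfl)
    · exact ht
    · exact ht
    · exact hup
    · exact hρup ▸ rot_mem_HRegion hup

open Classical in
noncomputable def symmExtend (N c : ℤ) (S : Set Tri) (g : Tri → Tri) : Tri → Tri :=
  S.piecewise g ((rot (N, 0) ⁻¹' S).piecewise (rot (N, 0) ∘ g ∘ rot (N, 0))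
    (Equiv.swap (axisUp c) (axisDown c)))

variable {S : Set Tri} {g : Tri → Tri}

lemma disjoint_rot_preimage (hS : ∀ t ∈ S, 0 ≤ t.2.1) : Disjoint S (rot (N, 0) ⁻¹' S) :=
  Set.disjoint_left.2 fun t ht hρt => by
    have := hS _ hρt
    have := hS t ht
    simp only [rot] at *
    omega

lemma symmExtend_rot (hN : N = 2 * c - 1) (hS : ∀ t ∈ S, 0 ≤ t.2.1) (t : Tri) :
    symmExtend N c S g (rot (N, 0) t) = rot (N, 0) (symmExtend N c S g t) := by
  classical
  have hdisj := disjoint_rot_preimage hS (N := N)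
  have hρS : ∀ t, rot (N, 0) t ∈ rot (N, 0) ⁻¹' S ↔ t ∈ S := fun t => by
    rw [Set.mem_preimage, rot_rot]
  unfold symmExtend
  by_cases ht : t ∈ S
  · rw [Set.piecewise_eq_of_notMem _ _ _ (Set.disjoint_right.1 hdisj ((hρS t).2 ht)),
      Set.piecewise_eq_of_mem _ _ _ ((hρS t).2 ht), Set.piecewise_eq_of_mem _ _ _ ht]
    simp only [Function.comp_apply, rot_rot]
  by_cases hρt : t ∈ rot (N, 0) ⁻¹' S
  · rw [Set.piecewise_eq_of_mem S _ _ hρt, Set.piecewise_eq_of_notMem _ _ _ ht,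
      Set.piecewise_eq_of_mem _ _ _ hρt]
    simp only [Function.comp_apply, rot_rot]
  · rw [Set.piecewise_eq_of_notMem S _ _ hρt, Set.piecewise_eq_of_notMem _ _ _ (mt (hρS t).1 ht),
      Set.piecewise_eq_of_notMem _ _ _ ht, Set.piecewise_eq_of_notMem _ _ _ hρt,
      (Function.LeftInverse.injective (rot_rot (N, 0))).map_swap, rot_axisUp, rot_axisDown,
      show N + 1 - c = c by omega, Equiv.swap_comm]

lemma isTiling_symmExtend {B : Set ℤ} (hN : N = 2 * c - 1) (hS : ∀ t ∈ S, 0 ≤ t.2.1)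
    (hcS : axisUp c ∉ S) (hcB : c ∉ B) (hg : IsTiling S ∅ g) :
    IsTiling (S ∪ (rot (N, 0) ⁻¹' S ∪ {axisUp c, axisDown c})) (HBar B) (symmExtend N c S g) := by
  classical
  have hS' : ∀ t ∈ rot (N, 0) ⁻¹' S, t.2.1 < 0 := fun t ht => by
    have := hS _ ht
    simp only [rot] at this
    omega
  have hupper : IsTiling S (HBar B) g := hg.of_bar_empty fun t ht s hs hts => by
    rcases rows_of_mem_HBar hts with ⟨h₁, h₂⟩ | ⟨h₁, h₂⟩ <;> linarith [hS t ht, hS s hs]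
  have hlower : IsTiling (rot (N, 0) ⁻¹' S) (HBar B) (rot (N, 0) ∘ g ∘ rot (N, 0)) := by
    have := hg.conj_rot (N, 0)
    rw [Set.preimage_empty] at this
    exact this.of_bar_empty fun t ht s hs hts => by
      rcases rows_of_mem_HBar hts with ⟨h₁, h₂⟩ | ⟨h₁, h₂⟩ <;> linarith [hS' t ht, hS' s hs]
  have haxis := isTiling_swap (adj_axisUp_axisDown c) (axisUp_axisDown_notMem_HBar hcB)
    (axisDown_axisUp_notMem_HBar hcB)
  have hdown : axisDown c ∉ S := fun h => by simpa [axisDown] using hS _ h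
  have hρup : rot (N, 0) (axisUp c) = axisDown c := by
    rw [rot_axisUp, show N + 1 - c = c by omega]
  have hρdown : rot (N, 0) (axisDown c) = axisUp c := by
    rw [rot_axisDown, show N + 1 - c = c by omega]
  refine hupper.piecewise (hlower.piecewise haxis ?_) ?_
  · simp only [Set.disjoint_insert_right, Set.disjoint_singleton_right, Set.mem_preimage, hρup,
      hρdown]
    exact ⟨hdown, hcS⟩
  · simp only [Set.disjoint_union_right, Set.disjoint_insert_right, Set.disjoint_singleton_right]
    exact ⟨disjoint_rot_preimage hS, hcS, hdown⟩

open Classical in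
lemma symmExtend_piecewise {Bar : Set (Tri × Tri)} {f : Tri → Tri}
    (hf : IsTiling (S ∪ (rot (N, 0) ⁻¹' S ∪ {axisUp c, axisDown c})) Bar f)
    (hsym : ∀ t, f (rot (N, 0) t) = rot (N, 0) (f t)) (hup : f (axisUp c) = axisDown c) :
    symmExtend N c S (S.piecewise f id) = f := by
  funext t
  unfold symmExtend
  by_cases ht : t ∈ S
  · rw [Set.piecewise_eq_of_mem _ _ _ ht, Set.piecewise_eq_of_mem _ _ _ ht]
  by_cases hρt : t ∈ rot (N, 0) ⁻¹' S
  · rw [Set.piecewise_eq_of_notMem _ _ _ ht, Set.piecewise_eq_of_mem _ _ _ hρt]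
    simp only [Function.comp_apply, Set.piecewise_eq_of_mem S _ _ hρt, hsym, rot_rot]
  rw [Set.piecewise_eq_of_notMem _ _ _ ht, Set.piecewise_eq_of_notMem _ _ _ hρt]
  by_cases htup : t = axisUp c
  · rw [htup, Equiv.swap_apply_left, hup]
  by_cases htdown : t = axisDown c
  · have hupR : axisUp c ∈ S ∪ (rot (N, 0) ⁻¹' S ∪ {axisUp c, axisDown c}) := by simp
    rw [htdown, Equiv.swap_apply_right, ← hup, (hf.2 _ hupR).2.2.1]
  rw [Equiv.swap_apply_of_ne_of_ne htup htdown, hf.1 t (by simp [ht, hρt, htup, htdown])]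

open Classical in
lemma piecewise_symmExtend {Bar : Set (Tri × Tri)} (hg : IsTiling S Bar g) :
    S.piecewise (symmExtend N c S g) id = g := by
  funext t
  by_cases ht : t ∈ S
  · rw [Set.piecewise_eq_of_mem _ _ _ ht, symmExtend, Set.piecewise_eq_of_mem _ _ _ ht]
  · rw [Set.piecewise_eq_of_notMem _ _ _ ht, hg.1 t ht, id]

theorem Mc_HRegion_eq_M_TRegion {B : Set ℤ} (hN : N = 2 * c - 1) (hc : 1 ≤ c)
    (hU : U ⊆ Icc 1 N) (hh : h = U.card + 1) (hcU : c ∉ U) (hcB : c ∉ B) :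
    Mc (N, 0) (HRegion N h h U (mir N U)) (HBar B) = M (TRegion h (N - h) ↑(U ∪ {c})) ∅ := by
  classical
  set T := TRegion h (N - h) ↑(U ∪ {c})
  have hhN : h ≤ N := by
    have hsub : U ⊆ (Icc 1 N).erase c := fun i hi => mem_erase.2 ⟨fun h => hcU (h ▸ hi), hU hi⟩
    have := card_le_card hsub
    rw [card_erase_of_mem (mem_Icc.2 ⟨hc, by omega⟩), Int.card_Icc] at this
    omega
  have hTR : ∀ t ∈ T, t ∈ HRegion N h h U (mir N U) ∧ 0 ≤ t.2.1 ∧ t ≠ axisUp c :=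
    fun t => mem_TRegion_iff.1
  have hR : HRegion N h h U (mir N U) = T ∪ (rot (N, 0) ⁻¹' T ∪ {axisUp c, axisDown c}) :=
    HRegion_eq_union hN hc (by omega) hcU
  have hrestrict : ∀ f, IsTiling (HRegion N h h U (mir N U)) (HBar B) f ∧
      (∀ t, f (rot (N, 0) t) = rot (N, 0) (f t)) → IsTiling T ∅ (T.piecewise f id) :=
    fun f ⟨hf, hsym⟩ => (hf.restrict (fun t ht => (hTR t ht).1)
      (hf.mapsTo_TRegion hsym hN hU hh hhN)).anti_bar (Set.empty_subset _)
  have hextend : ∀ g, IsTiling T ∅ g → IsTiling (HRegion N h h U (mir N U)) (HBar B)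
      (symmExtend N c T g) ∧ ∀ t, symmExtend N c T g (rot (N, 0) t) =
        rot (N, 0) (symmExtend N c T g t) := fun g hg =>
    ⟨hR ▸ isTiling_symmExtend hN (fun t ht => (hTR t ht).2.1) (fun ht => (hTR _ ht).2.2 rfl)
      hcB hg, symmExtend_rot hN fun t ht => (hTR t ht).2.1⟩
  rw [Mc, M]
  exact Nat.card_congr
    { toFun := fun f => ⟨T.piecewise f.1 id, hrestrict f.1 f.2⟩
      invFun := fun g => ⟨symmExtend N c T g.1, hextend g.1 g.2⟩
      left_inv := fun f => Subtype.ext <| symmExtend_piecewise (by rw [← hR]; exact f.2.1) f.2.2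
        (f.2.1.apply_axisUp f.2.2 hN hU hh hhN)
      right_inv := fun g => Subtype.ext (piecewise_symmExtend g.2) }

end Hexagon

lemma McCS_eq_Mc_HRegion {x y : ℕ} {U D B : Finset ℤ} {N : ℤ}
    (hN : N = x + y + 2 * (U ∪ D).card) (hUD : ∀ i ∈ U ∪ D, 2 * i ≤ N) :
    McCS x y U D B = Mc (N, 0)
      (HRegion N (y + (U ∪ mir N D).card) (y + (U ∪ mir N D).card) ↑(U ∪ mir N D)
        ↑(mir N (U ∪ mir N D))) (HBar ↑(B ∪ mir N B)) := by
  have hsym : D ∪ mir N U = mir N (U ∪ mir N D) := by rw [mir_union, mir_mir, union_comm]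
  have hunion : U ∪ mir N D ∪ mir N (U ∪ mir N D) = U ∪ D ∪ mir N (U ∪ D) := by
    rw [mir_union, mir_union, mir_mir]
    ext
    simp only [mem_union]
    tauto
  have hcard : (U ∪ mir N D ∪ mir N (U ∪ mir N D)).card = 2 * (U ∪ D).card := by
    rw [hunion, card_union_mir_of_two_mul_le hUD hUD, two_mul]
  simp only [McCS]
  rw [← hN, hsym, hcard, card_mir]
  congr 2
  push_cast
  omega

theorem stmt15_general (x : ℕ) (hx : Even x) (U D B : Finset ℤ)
    (n : ℕ) (hn : n = (U ∪ D).card) (N : ℕ) (hN : N = x + 1 + 2 * n)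
    (m : ℕ) (hm : m = 2 * n - U.card - D.card)
    (hU : U ⊆ Icc 1 ((N / 2 : ℕ) : ℤ)) (hD : D ⊆ Icc 1 ((N / 2 : ℕ) : ℤ))
    (hmid : (((N + 1) / 2 : ℕ) : ℤ) ∉ U ∪ D ∪ B) :
    McCS x 1 U D B =
      MT ((1 + U.card + D.card : ℕ) : ℤ) ((x + m : ℕ) : ℤ)
        (U ∪ mir (N : ℤ) D ∪ {(((N + 1) / 2 : ℕ) : ℤ)}) := by
  obtain ⟨k, rfl⟩ := hx
  set c : ℤ := (((N + 1) / 2 : ℕ) : ℤ)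
  have hc : 2 * c = N + 1 := by omega
  have hhalf : ∀ W ⊆ Icc 1 ((N / 2 : ℕ) : ℤ), ∀ i ∈ W, 2 * i ≤ N := fun W hW i hi => by
    have := mem_Icc.1 (hW hi)
    omega
  have hIcc : Icc 1 ((N / 2 : ℕ) : ℤ) ⊆ Icc 1 (N : ℤ) := Icc_subset_Icc le_rfl (by omega)
  have hcard := card_union_mir_of_two_mul_le (N := N) (hhalf U hU) (hhalf D hD)
  have hun := card_le_card (subset_union_left (s₁ := U) (s₂ := D))
  have hdn := card_le_card (subset_union_right (s₁ := U) (s₂ := D))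
  simp only [mem_union, not_or] at hmid
  rw [McCS_eq_Mc_HRegion (N := N) (by push_cast; omega) (hhalf _ (union_subset hU hD)),
    Mc_HRegion_eq_M_TRegion (c := c) (by omega) (by omega)
      (union_subset (hU.trans hIcc) (mir_subset_Icc (hD.trans hIcc))) (by push_cast; ring)
      (by rw [mem_union_mir_of_two_mul_eq hc]; tauto)
      (by rw [mem_coe, mem_union_mir_of_two_mul_eq hc]; tauto), MT]
  congr 2 <;> push_cast [hcard] <;> omega

/-- base case `y = 1`. -/
theorem stmt15 (x : ℕ) (hx : Even x) (U D B : Finset ℤ)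
    (n : ℕ) (hn : n = (U ∪ D).card) (N : ℕ) (hN : N = x + 1 + 2 * n)
    (m : ℕ) (hm : m = 2 * n - U.card - D.card)
    (hU : U ⊆ Icc 1 ((N / 2 : ℕ) : ℤ)) (hD : D ⊆ Icc 1 ((N / 2 : ℕ) : ℤ))
    (hB : B ⊆ Icc 1 ((N / 2 : ℕ) : ℤ))
    (hBd : B ∩ (U ∪ D) = ∅) (hBcard : 2 * B.card ≤ x)
    (hmid : (((N + 1) / 2 : ℕ) : ℤ) ∉ U ∪ D ∪ B) :
    McCS x 1 U D B =
      MT ((1 + U.card + D.card : ℕ) : ℤ) ((x + m : ℕ) : ℤ)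
        (U ∪ mir (N : ℤ) D ∪ {(((N + 1) / 2 : ℕ) : ℤ)}) :=
  stmt15_general x hx U D B n hn N hN m hm hU hD hmid

end Shuf
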